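/- arXiv:math/0607251 — 2 statements merged into one kernel-verified Lean document; each statement's English description precedes it below -/
import Mathlib

section
/- Fix an integer e>1 and a charge (s_0,s_1)∈ℕ². For every n≥0 and every bipartition λ=(λ^(0),λ^(1)) of rank n, λ belongs to Φ_{e,n}^{(s_0,s_1)} if and only if the swapped bipartition (λ^(1),λ^(0)) belongs to Φ_{e,n}^{(s_1,s_0+e)}. Equivalently, Φ_{e,n}^{(s_1,s_0+e)} = { (λ^(0),λ^(1)) ∈ Π_{2,n} : (λ^(1),λ^(0)) ∈ Φ_{e,n}^{(s_0,s_1)} }. -/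
open Finset

/-- A node `(a, b, c)`: row index `a ≥ 1`, column index `b ≥ 1`, component `c ∈ {0,1}`. -/
abbrev Node : Type := ℕ × ℕ × Fin 2

namespace UglovPaper

/-- Row index of a node. -/
def nrow (γ : Node) : ℕ := γ.1

/-- Column index of a node. -/
def ncol (γ : Node) : ℕ := γ.2.1

/-- Component of a node. -/
def ncomp (γ : Node) : Fin 2 := γ.2.2

/-- A finite set of nodes is the Young diagram of a bipartition iff all indices are `≥ 1`
and the set is closed under moving left in a row and up in a column (in each component). -/
def IsDiagram (D : Finset Node) : Prop :=
  (∀ γ ∈ D, 1 ≤ nrow γ ∧ 1 ≤ ncol γ) ∧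
  (∀ γ ∈ D, ∀ b' : ℕ, 1 ≤ b' → b' ≤ ncol γ → (nrow γ, b', ncomp γ) ∈ D) ∧
  (∀ γ ∈ D, 2 ≤ nrow γ → (nrow γ - 1, ncol γ, ncomp γ) ∈ D)

/-- `part D c a` is the `a`-th part `λ^(c)_a` of the bipartition with diagram `D`. -/
def part (D : Finset Node) (c : Fin 2) (a : ℕ) : ℕ :=
  (D.filter (fun γ => nrow γ = a ∧ ncomp γ = c)).card

/-- The content `b - a + s_c` of a node `(a,b,c)` for the charge `s`. -/
def cont (s : Fin 2 → ℤ) (γ : Node) : ℤ := (ncol γ : ℤ) - (nrow γ : ℤ) + s (ncomp γ)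

/-- The residue mod `e` of a node for the charge `s`. -/
def res (e : ℕ) (s : Fin 2 → ℤ) (γ : Node) : ZMod e := ((cont s γ : ℤ) : ZMod e)

/-- The order `γ <_{(s₀,s₁)} γ'` on nodes. -/
def chargeLT (s : Fin 2 → ℤ) (γ γ' : Node) : Prop :=
  cont s γ < cont s γ' ∨ (cont s γ = cont s γ' ∧ ncomp γ' < ncomp γ)

/-- The positive asymptotic order `γ <_{(v₀,v₁)₊} γ'`. -/
def posLT (γ γ' : Node) : Prop :=
  ncomp γ' < ncomp γ ∨ (ncomp γ = ncomp γ' ∧ nrow γ' < nrow γ)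

/-- The negative asymptotic order `γ <_{(v₀,v₁)₋} γ'`. -/
def negLT (γ γ' : Node) : Prop :=
  ncomp γ < ncomp γ' ∨ (ncomp γ = ncomp γ' ∧ nrow γ' < nrow γ)

/-- `γ` is a removable node of the diagram `D`. -/
def Removable (D : Finset Node) (γ : Node) : Prop := γ ∈ D ∧ IsDiagram (D.erase γ)

/-- `γ` is an addable node of the diagram `D`. -/
def Addable (D : Finset Node) (γ : Node) : Prop := γ ∉ D ∧ IsDiagram (insert γ D)

/-- `γ` is a normal `i`-node of `D` with respect to the order `lt` and the residue map `r`: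
it is a removable `i`-node, and for every `i`-node `η` above it, the number of addable
`i`-nodes in the interval `(γ, η]` does not exceed the number of removable `i`-nodes there.
This is equivalent to surviving the `RA`-deletion process. -/
def NormalNode {α : Type*} (D : Finset Node) (lt : Node → Node → Prop)
    (r : Node → α) (i : α) (γ : Node) : Prop :=
  Removable D γ ∧ r γ = i ∧
  ∀ η : Node, r η = i → lt γ η →
    {x : Node | Addable D x ∧ r x = i ∧ lt γ x ∧ (lt x η ∨ x = η)}.ncard ≤
    {x : Node | Removable D x ∧ r x = i ∧ lt γ x ∧ (lt x η ∨ x = η)}.ncard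

/-- `γ` is the good `i`-node of `D`: the minimal normal `i`-node for the order `lt`. -/
def GoodNode {α : Type*} (D : Finset Node) (lt : Node → Node → Prop)
    (r : Node → α) (i : α) (γ : Node) : Prop :=
  NormalNode D lt r i γ ∧ ∀ δ : Node, NormalNode D lt r i δ → δ = γ ∨ lt γ δ

/-- The recursively defined class of bipartitions labelling the crystal:
the empty bipartition has rank `0`, and a bipartition of rank `n + 1` belongs iff
removing some good `i`-node yields a member of rank `n`. -/
inductive CrystalSet {α : Type*} (lt : Node → Node → Prop) (r : Node → α) :
    ℕ → Finset Node → Prop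
  | empty : CrystalSet lt r 0 ∅
  | step {n : ℕ} {D : Finset Node} {γ : Node} (i : α) :
      IsDiagram D → GoodNode D lt r i γ →
      CrystalSet lt r n (D.erase γ) → CrystalSet lt r (n + 1) D

/-- The set `Φ_{e,n}^{(s₀,s₁)}` of Uglov bipartitions. -/
def UglovSet (e : ℕ) (s : Fin 2 → ℤ) : ℕ → Finset Node → Prop :=
  CrystalSet (chargeLT s) (res e s)

/-- The set `Φ_{e,n}^{(v₀,v₁)₊}` of positive Kleshchev bipartitions. -/
def KleshchevPos (e : ℕ) (v : Fin 2 → ℤ) : ℕ → Finset Node → Prop :=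
  CrystalSet posLT (res e v)

/-- The set `Φ_{e,n}^{(v₀,v₁)₋}` of negative Kleshchev bipartitions. -/
def KleshchevNeg (e : ℕ) (v : Fin 2 → ℤ) : ℕ → Finset Node → Prop :=
  CrystalSet negLT (res e v)

/-- Swapping the two components of a bipartition: `(λ⁽⁰⁾,λ⁽¹⁾) ↦ (λ⁽¹⁾,λ⁽⁰⁾)`. -/
def swapDiagram (D : Finset Node) : Finset Node :=
  D.image (fun γ => (γ.1, γ.2.1, γ.2.2 + 1))

/-! ### Symbols -/

/-- `beta s m D c j` is the `j`-th entry `β^(c)_j = λ^(c)_j − j + s_c + m` of the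
`s`-symbol of `D`, for `1 ≤ j ≤ m + s_c`. -/
def beta (s : Fin 2 → ℕ) (m : ℕ) (D : Finset Node) (c : Fin 2) (j : ℕ) : ℕ :=
  part D c j + (m + s c) - j

/-- The multiset of entries of the row `β^(c)` of the `s`-symbol. -/
def rowM (s : Fin 2 → ℕ) (m : ℕ) (D : Finset Node) (c : Fin 2) : Multiset ℕ :=
  (Finset.Icc 1 (m + s c)).val.map (beta s m D c)

/-- The list of the values `θ(β⁽⁰⁾_{m+s₀}), θ(β⁽⁰⁾_{m+s₀-1}), …` chosen greedily:
at step `k` (handling `p = m + s₀ - k`) we choose the largest entry of the top row not yet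
used that is `≤ β⁽⁰⁾_p`. -/
def thetaList (s : Fin 2 → ℕ) (m : ℕ) (D : Finset Node) : ℕ → List ℕ
  | 0 => []
  | k + 1 =>
      let prev := thetaList s m D k
      prev ++ [((((Finset.Icc 1 (m + s 1)).image (beta s m D 1)).filter
          (fun y => y ∉ prev ∧ y ≤ beta s m D 0 (m + s 0 - k))).max.unbotD 0)]

/-- The greedy injection `θ`, as a function of the index `p ∈ {1, …, m + s₀}`:
`theta s m D p = θ(β⁽⁰⁾_p)`. -/
def theta (s : Fin 2 → ℕ) (m : ℕ) (D : Finset Node) (p : ℕ) : ℕ :=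
  (thetaList s m D (m + s 0)).getD (m + s 0 - p) 0

/-- The bottom row of the symbol obtained by exchanging the entries of every pair:
it is the multiset of the values `θ(β⁽⁰⁾_p)`. -/
def bottomRowNew (s : Fin 2 → ℕ) (m : ℕ) (D : Finset Node) : Multiset ℕ :=
  (Finset.Icc 1 (m + s 0)).val.map (theta s m D)

/-- The top row of the symbol obtained by exchanging the entries of every pair:
all entries of both rows that did not go to the new bottom row. -/
def topRowNew (s : Fin 2 → ℕ) (m : ℕ) (D : Finset Node) : Multiset ℕ :=
  (rowM s m D 0 + rowM s m D 1) - bottomRowNew s m D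

/-- The rows of the symbol of `Υ(λ)`. -/
def newRow (s : Fin 2 → ℕ) (m : ℕ) (D : Finset Node) (c : Fin 2) : Multiset ℕ :=
  if c = 0 then bottomRowNew s m D else topRowNew s m D

/-- The `j`-th largest entry of a multiset of naturals (`j ≥ 1`). -/
def rowEntry (B : Multiset ℕ) (j : ℕ) : ℕ :=
  (B.sort (· ≤ ·)).getD (Multiset.card B - j) 0

/-- The `j`-th part of the partition encoded by a multiset of `card B` distinct
beta-numbers: `λ_j = (j-th largest entry) + j - card B`. -/
def rowPart (B : Multiset ℕ) (j : ℕ) : ℕ :=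
  if 1 ≤ j ∧ j ≤ Multiset.card B then rowEntry B j + j - Multiset.card B else 0

/-- The Young diagram of the bipartition with parts `p`, within the box of size `N`. -/
def toDiagram (p : Fin 2 → ℕ → ℕ) (N : ℕ) : Finset Node :=
  ((Finset.Icc 1 N) ×ˢ (Finset.Icc 1 N) ×ˢ (Finset.univ : Finset (Fin 2))).filter
    (fun γ => γ.2.1 ≤ p γ.2.2 γ.1)

/-- The map `Υ_{(s₀,s₁)}`: exchange the two entries of every pair of the `s`-symbol and
reorder the rows; `Upsilon s m D` is the diagram of the resulting bipartition. -/
def Upsilon (s : Fin 2 → ℕ) (m : ℕ) (D : Finset Node) : Finset Node :=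
  toDiagram (fun c j => rowPart (newRow s m D c) j) D.card

/-- The list of values `τ(α⁽⁰⁾_1), τ(α⁽⁰⁾_2), …` chosen greedily: at step `k + 1`
(handling `p = k + 1`) we choose the smallest entry of the top row `Top` not yet used
that is `≥ b (k+1)`, where `b p` is the `p`-th entry of the bottom row. -/
def tauList (Top : Finset ℕ) (b : ℕ → ℕ) : ℕ → List ℕ
  | 0 => []
  | k + 1 =>
      let prev := tauList Top b k
      prev ++ [((Top.filter (fun y => y ∉ prev ∧ b (k + 1) ≤ y)).min.untopD 0)]

/-- The greedy injection `τ`, as a function of the index `p ∈ {1, …, P}`. -/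
def tau (Top : Finset ℕ) (b : ℕ → ℕ) (P : ℕ) (p : ℕ) : ℕ :=
  (tauList Top b P).getD (p - 1) 0

end UglovPaper
namespace UglovPaper

/-! Swapping the two components and passing from the charge `(s₀, s₁)` to `(s₁, s₀ + e)` preserves
residues, and on nodes of a fixed residue it preserves the order `<_s`: two such nodes have contents
congruent mod `e`, so `<_s` compares them by the weight `2 · content - e · component`, and the swap
raises every weight by exactly `e`. A bijection of nodes with these properties carries addable,
removable, normal and good nodes to nodes of the same kind, hence the recursive definition of
Uglov bipartitions is transported along it. -/

section Transport

variable {α : Type*} {lt lt' : Node → Node → Prop} {r r' : Node → α} {σ : Node ≃ Node}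

/-- Only nodes of equal residue are ever compared by the crystal rules, so the order needs to be
transported only on them. -/
structure IsCrystalIso (σ : Node ≃ Node) (lt lt' : Node → Node → Prop) (r r' : Node → α) :
    Prop where
  isDiagram_map_iff : ∀ D : Finset Node, IsDiagram (D.map σ.toEmbedding) ↔ IsDiagram D
  res_apply : ∀ x, r' (σ x) = r x
  lt_apply_iff : ∀ x y, r x = r y → (lt' (σ x) (σ y) ↔ lt x y)

lemma removable_map_iff
    (hσ : ∀ D : Finset Node, IsDiagram (D.map σ.toEmbedding) ↔ IsDiagram D)
    {D : Finset Node} {x : Node} :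
    Removable (D.map σ.toEmbedding) (σ x) ↔ Removable D x := by
  rw [Removable, Removable, ← Equiv.coe_toEmbedding, ← Finset.map_erase, hσ,
    Finset.mem_map']

lemma addable_map_iff
    (hσ : ∀ D : Finset Node, IsDiagram (D.map σ.toEmbedding) ↔ IsDiagram D)
    {D : Finset Node} {x : Node} :
    Addable (D.map σ.toEmbedding) (σ x) ↔ Addable D x := by
  rw [Addable, Addable, ← Equiv.coe_toEmbedding, ← Finset.map_insert, hσ,
    Finset.mem_map']

lemma ncard_setOf_eq_of_equiv {β γ : Type*} (σ : β ≃ γ) {p : γ → Prop} {q : β → Prop}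
    (hpq : ∀ x, p (σ x) ↔ q x) : {x | p x}.ncard = {x | q x}.ncard := by
  have hp : {x | p x} = σ.symm ⁻¹' {x | q x} := by
    ext x
    simpa using hpq (σ.symm x)
  rw [hp, Set.ncard_preimage_of_injective_subset_range σ.symm.injective
    (σ.symm.surjective.range_eq ▸ Set.subset_univ _)]

namespace IsCrystalIso

lemma symm (h : IsCrystalIso σ lt lt' r r') : IsCrystalIso σ.symm lt' lt r' r where
  isDiagram_map_iff D := by
    rw [← h.isDiagram_map_iff, Finset.map_map]
    simp
  res_apply x := by rw [← h.res_apply, Equiv.apply_symm_apply]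
  lt_apply_iff x y hxy := by
    rw [← h.lt_apply_iff _ _ (by simpa [← h.res_apply] using hxy)]
    simp

lemma normalNode_map_iff (h : IsCrystalIso σ lt lt' r r') {D : Finset Node} {i : α}
    {γ : Node} : NormalNode (D.map σ.toEmbedding) lt' r' i (σ γ) ↔ NormalNode D lt r i γ := by
  unfold NormalNode
  rw [removable_map_iff h.isDiagram_map_iff, h.res_apply]
  refine and_congr_right fun _ => and_congr_right fun hγ => ?_
  rw [← σ.forall_congr_right]
  refine forall_congr' fun η => ?_
  rw [h.res_apply]
  refine imp_congr_right fun hη => ?_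
  rw [h.lt_apply_iff _ _ (hγ.trans hη.symm)]
  refine imp_congr_right fun _ => ?_
  have hinterval : ∀ x, (r' (σ x) = i ∧ lt' (σ γ) (σ x) ∧ (lt' (σ x) (σ η) ∨ σ x = σ η)) ↔
      (r x = i ∧ lt γ x ∧ (lt x η ∨ x = η)) := by
    intro x
    rw [h.res_apply]
    refine and_congr_right fun hx => ?_
    rw [h.lt_apply_iff _ _ (hγ.trans hx.symm), h.lt_apply_iff _ _ (hx.trans hη.symm),
      σ.injective.eq_iff]
  exact Iff.of_eq <| congrArg₂ (· ≤ ·)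
    (ncard_setOf_eq_of_equiv σ fun x => (addable_map_iff h.isDiagram_map_iff).and (hinterval x))
    (ncard_setOf_eq_of_equiv σ fun x => (removable_map_iff h.isDiagram_map_iff).and (hinterval x))

lemma goodNode_map_iff (h : IsCrystalIso σ lt lt' r r') {D : Finset Node} {i : α}
    {γ : Node} : GoodNode (D.map σ.toEmbedding) lt' r' i (σ γ) ↔ GoodNode D lt r i γ := by
  unfold GoodNode
  rw [h.normalNode_map_iff]
  refine and_congr_right fun hγ => ?_
  rw [← σ.forall_congr_right]
  refine forall_congr' fun δ => ?_
  rw [h.normalNode_map_iff]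
  refine imp_congr_right fun hδ => ?_
  rw [σ.injective.eq_iff, h.lt_apply_iff _ _ (hγ.2.1.trans hδ.2.1.symm)]

lemma crystalSet_map (h : IsCrystalIso σ lt lt' r r') {n : ℕ} {D : Finset Node}
    (hcrys : CrystalSet lt r n D) : CrystalSet lt' r' n (D.map σ.toEmbedding) := by
  induction hcrys with
  | empty => exact CrystalSet.empty
  | @step n D γ i hdiag hgood _ ih =>
    refine CrystalSet.step (γ := σ γ) i ((h.isDiagram_map_iff D).2 hdiag)
      (h.goodNode_map_iff.2 hgood) ?_
    rwa [← Equiv.coe_toEmbedding, ← Finset.map_erase]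

lemma crystalSet_map_iff (h : IsCrystalIso σ lt lt' r r') {n : ℕ} {D : Finset Node} :
    CrystalSet lt' r' n (D.map σ.toEmbedding) ↔ CrystalSet lt r n D := by
  refine ⟨fun hcrys => ?_, h.crystalSet_map⟩
  simpa [Finset.map_map] using h.symm.crystalSet_map hcrys

end IsCrystalIso

end Transport

def permComponents (π : Equiv.Perm (Fin 2)) : Node ≃ Node :=
  (Equiv.refl ℕ).prodCongr ((Equiv.refl ℕ).prodCongr π)

lemma permComponents_symm (π : Equiv.Perm (Fin 2)) :
    (permComponents π).symm = permComponents π.symm :=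
  rfl

lemma IsDiagram.map_permComponents {D : Finset Node} (hD : IsDiagram D)
    (π : Equiv.Perm (Fin 2)) : IsDiagram (D.map (permComponents π).toEmbedding) := by
  set σ := permComponents π
  have hmem : ∀ x, x ∈ D.map σ.toEmbedding ↔ σ.symm x ∈ D := fun _ => Finset.mem_map_equiv
  obtain ⟨hpos, hrow, hcol⟩ := hD
  exact ⟨fun x hx => hpos (σ.symm x) ((hmem x).1 hx),
    fun x hx b hb₁ hb₂ => (hmem _).2 (hrow (σ.symm x) ((hmem x).1 hx) b hb₁ hb₂),
    fun x hx ha => (hmem _).2 (hcol (σ.symm x) ((hmem x).1 hx) ha)⟩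

lemma isDiagram_map_permComponents_iff (π : Equiv.Perm (Fin 2)) (D : Finset Node) :
    IsDiagram (D.map (permComponents π).toEmbedding) ↔ IsDiagram D := by
  refine ⟨fun hD => ?_, fun hD => hD.map_permComponents π⟩
  simpa [Finset.map_map, ← permComponents_symm] using hD.map_permComponents π.symm

abbrev swapComponents : Node ≃ Node := permComponents (Equiv.addRight 1)

lemma swapDiagram_eq_map (D : Finset Node) :
    swapDiagram D = D.map swapComponents.toEmbedding := by
  rw [Finset.map_eq_image]
  rfl

section Charge

variable {e : ℕ} {t : Fin 2 → ℤ}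

def weight (e : ℕ) (t : Fin 2 → ℤ) (x : Node) : ℤ := 2 * cont t x - e * (ncomp x : ℕ)

lemma dvd_cont_sub_of_res_eq {x y : Node} (h : res e t x = res e t y) :
    (e : ℤ) ∣ cont t y - cont t x :=
  (ZMod.intCast_eq_intCast_iff_dvd_sub _ _ _).1 h

lemma chargeLT_iff_weight_lt (he : 0 < e) {x y : Node} (h : (e : ℤ) ∣ cont t y - cont t x) :
    chargeLT t x y ↔ weight e t x < weight e t y := by
  have he' : (0 : ℤ) < e := by exact_mod_cast he
  have hsep : cont t x + e ≤ cont t y ∨ cont t x = cont t y ∨ cont t y + e ≤ cont t x := by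
    rcases lt_trichotomy (cont t x) (cont t y) with hlt | heq | hgt
    · exact Or.inl (by linarith [Int.le_of_dvd (by linarith) h])
    · exact Or.inr (Or.inl heq)
    · exact Or.inr (Or.inr (by linarith [Int.le_of_dvd (by linarith) (dvd_sub_comm.1 h)]))
  rw [chargeLT, weight, weight, Fin.lt_def]
  have hx := (ncomp x).isLt
  have hy := (ncomp y).isLt
  interval_cases (ncomp x : ℕ) <;> interval_cases (ncomp y : ℕ) <;>
    constructor <;> omega

lemma res_swapComponents (x : Node) : res e ![t 1, t 0 + e] (swapComponents x) = res e t x := by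
  obtain ⟨a, b, c⟩ := x
  fin_cases c <;> simp [res, cont, ncomp, nrow, ncol, permComponents]

lemma weight_swapComponents (x : Node) :
    weight e ![t 1, t 0 + e] (swapComponents x) = weight e t x + e := by
  obtain ⟨a, b, c⟩ := x
  fin_cases c
  · simp [weight, cont, ncomp, nrow, ncol, permComponents]
    ring
  · simp [weight, cont, ncomp, nrow, ncol, permComponents]

lemma isCrystalIso_swapComponents (he : 0 < e) (t : Fin 2 → ℤ) :
    IsCrystalIso swapComponents (chargeLT t) (chargeLT ![t 1, t 0 + e]) (res e t)
      (res e ![t 1, t 0 + e]) where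
  isDiagram_map_iff := isDiagram_map_permComponents_iff _
  res_apply := res_swapComponents
  lt_apply_iff x y hxy := by
    have hxy' := (res_swapComponents x).trans (hxy.trans (res_swapComponents y).symm)
    rw [chargeLT_iff_weight_lt he (dvd_cont_sub_of_res_eq hxy'),
      chargeLT_iff_weight_lt he (dvd_cont_sub_of_res_eq hxy), weight_swapComponents,
      weight_swapComponents, add_lt_add_iff_right]

end Charge

theorem uglovSet_swap_general (e : ℕ) (he : 1 < e) (s₀ s₁ : ℕ) (n : ℕ)
    (D : Finset Node) :
    UglovSet e ![(s₀ : ℤ), (s₁ : ℤ)] n D ↔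
      UglovSet e ![(s₁ : ℤ), (s₀ : ℤ) + e] n (swapDiagram D) := by
  rw [swapDiagram_eq_map]
  exact ((isCrystalIso_swapComponents (by omega) ![(s₀ : ℤ), (s₁ : ℤ)]).crystalSet_map_iff).symm

/-- a bipartition `λ` of rank `n` lies in `Φ_{e,n}^{(s₀,s₁)}` iff the swapped
bipartition lies in `Φ_{e,n}^{(s₁,s₀+e)}`. -/
theorem uglovSet_swap (e : ℕ) (he : 1 < e) (s₀ s₁ : ℕ) (n : ℕ)
    (D : Finset Node) (hD : IsDiagram D) (hcard : D.card = n) :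
    UglovSet e ![(s₀ : ℤ), (s₁ : ℤ)] n D ↔
      UglovSet e ![(s₁ : ℤ), (s₀ : ℤ) + e] n (swapDiagram D) :=
  uglovSet_swap_general e he s₀ s₁ n D

end UglovPaper
end

section
/- Fix an integer e>1 and a charge (s_0,s_1)∈ℕ² with s_0 ≤ s_1. If λ ∈ Φ_{e,n}^{(s_0,s_1)} and f is an integer with f > max(s_0+n, s_1+n), then λ ∈ Φ_{f,n}^{(s_0,s_1)} (Uglov bipartitions defined with residues taken modulo f instead of e). -/
open Finset

/-! Write `d = s₁ - s₀`. Every Uglov bipartition, for any `e`, satisfies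
`λ^(1)_{j+d} ≤ λ^(0)_j` for all `j`: removing a node of `λ^(1)` can only repair a violation at
row `j` if that node has the same content as the addable node at the end of row `j` of `λ^(0)`,
which follows it in the order, so the pair cancels as `RA` and the node is not normal.
Conversely, when `f > n + d`, the contents of the addable and removable nodes of a bipartition of
rank at most `n` differ by less than `f`, so equal residues mean equal contents and every
`i`-signature has at most one letter per component. A bipartition satisfying the inequalities then
has a good node whose removal preserves them: a removable node of `λ^(1)` not cancelled by an
addable node of `λ^(0)`, or else any removable node of `λ^(0)`, which the cancellations force to
be strictly longer than the corresponding row of `λ^(1)`. -/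

namespace UglovPaper

section Diagram

variable {D : Finset Node} {a b : ℕ} {c : Fin 2}

lemma mem_iff_le_part (hD : IsDiagram D) :
    ((a, b, c) : Node) ∈ D ↔ 1 ≤ a ∧ 1 ≤ b ∧ b ≤ part D c a := by
  constructor
  · intro h
    obtain ⟨ha, hb⟩ := hD.1 _ h
    refine ⟨ha, hb, ?_⟩
    calc b = ((Icc 1 b).image fun b' => ((a, b', c) : Node)).card := by
          rw [card_image_of_injective _ fun x y hxy => by simpa using hxy]; simp
      _ ≤ part D c a := card_le_card fun γ hγ => by
          obtain ⟨b', hb', rfl⟩ := mem_image.1 hγ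
          rw [mem_Icc] at hb'
          exact mem_filter.2 ⟨hD.2.1 _ h b' hb'.1 hb'.2, rfl, rfl⟩
  · rintro ⟨ha, hb, hbp⟩
    by_contra hnot
    have hrow : D.filter (fun γ => nrow γ = a ∧ ncomp γ = c) ⊆
        (Icc 1 (b - 1)).image fun b' => ((a, b', c) : Node) := by
      intro γ hγ
      obtain ⟨hγD, rfl, rfl⟩ := mem_filter.1 hγ
      refine mem_image.2 ⟨ncol γ, mem_Icc.2 ⟨(hD.1 γ hγD).2, ?_⟩, rfl⟩
      by_contra hlt
      exact hnot (hD.2.1 γ hγD b hb (by omega))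
    have := (card_le_card hrow).trans card_image_le
    rw [Nat.card_Icc] at this
    unfold part at hbp
    omega

lemma part_antitone (hD : IsDiagram D) (c : Fin 2) {a a' : ℕ} (ha : 1 ≤ a) (h : a ≤ a') :
    part D c a' ≤ part D c a := by
  induction a', h using Nat.le_induction with
  | base => exact le_rfl
  | succ a' ha' ih =>
    refine le_trans ?_ ih
    rcases Nat.eq_zero_or_pos (part D c (a' + 1)) with h0 | hpos
    · omega
    · have hmem := (mem_iff_le_part hD).2 ⟨by omega, hpos, le_rfl⟩
      have hup := hD.2.2 _ hmem (by simp only [nrow]; omega)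
      exact ((mem_iff_le_part hD).1 hup).2.2

lemma mem_of_le (hD : IsDiagram D) (h : ((a, b, c) : Node) ∈ D) {a' b' : ℕ}
    (ha' : 1 ≤ a') (haa : a' ≤ a) (hb' : 1 ≤ b') (hbb : b' ≤ b) : ((a', b', c) : Node) ∈ D := by
  obtain ⟨-, -, hb⟩ := (mem_iff_le_part hD).1 h
  exact (mem_iff_le_part hD).2 ⟨ha', hb', hbb.trans (hb.trans (part_antitone hD c ha' haa))⟩

lemma removable_iff (hD : IsDiagram D) :
    Removable D (a, b, c) ↔ 1 ≤ a ∧ 1 ≤ b ∧ b = part D c a ∧ part D c (a + 1) < b := by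
  constructor
  · rintro ⟨hmem, hE⟩
    obtain ⟨ha, hb, hbp⟩ := (mem_iff_le_part hD).1 hmem
    have hnot : ((a, b, c) : Node) ∉ D.erase (a, b, c) := notMem_erase _ _
    refine ⟨ha, hb, ?_, ?_⟩
    · by_contra hne
      have hright : ((a, b + 1, c) : Node) ∈ D.erase (a, b, c) :=
        mem_erase.2 ⟨by simp, (mem_iff_le_part hD).2 ⟨ha, by omega, by omega⟩⟩
      exact hnot (hE.2.1 _ hright b hb (by simp [ncol]))
    · by_contra hge
      have hbelow : ((a + 1, b, c) : Node) ∈ D.erase (a, b, c) :=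
        mem_erase.2 ⟨by simp, (mem_iff_le_part hD).2 ⟨by omega, hb, by omega⟩⟩
      exact hnot (hE.2.2 _ hbelow (by simp only [nrow]; omega))
  · rintro ⟨ha, hb, rfl, hlt⟩
    refine ⟨(mem_iff_le_part hD).2 ⟨ha, hb, le_rfl⟩, fun η hη => hD.1 η (mem_of_mem_erase hη),
      fun ⟨a', b', c'⟩ hη b'' hb'' hle => ?_, fun ⟨a', b', c'⟩ hη h2 => ?_⟩ <;>
      obtain ⟨hne, hηD⟩ := mem_erase.1 hη <;>
      have hb' := ((mem_iff_le_part hD).1 hηD).2.2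
    · simp only [nrow, ncol, ncomp] at hle ⊢
      refine mem_erase.2 ⟨?_, hD.2.1 _ hηD b'' hb'' hle⟩
      rintro ⟨⟩
      exact hne (by rw [le_antisymm hb' hle])
    · simp only [nrow, ncol, ncomp] at h2 ⊢
      refine mem_erase.2 ⟨?_, hD.2.2 _ hηD h2⟩
      rintro ⟨⟩
      rw [Nat.sub_add_cancel (by omega : 1 ≤ a')] at hlt
      omega

lemma addable_iff (hD : IsDiagram D) :
    Addable D (a, b, c) ↔
      1 ≤ a ∧ b = part D c a + 1 ∧ (a = 1 ∨ part D c a < part D c (a - 1)) := by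
  constructor
  · rintro ⟨hnot, hI⟩
    have hself : ((a, b, c) : Node) ∈ insert (a, b, c) D := mem_insert_self _ _
    obtain ⟨ha, hb⟩ := hI.1 _ hself
    simp only [nrow, ncol] at ha hb
    have hgt : part D c a < b := by
      by_contra hle
      exact hnot ((mem_iff_le_part hD).2 ⟨ha, hb, by omega⟩)
    refine ⟨ha, ?_, ?_⟩
    · by_contra hne
      rcases mem_insert.1 (hI.2.1 _ hself (b - 1) (by omega) (by simp [ncol])) with h | h
      · simp only [Prod.mk.injEq] at h; omega
      · have := ((mem_iff_le_part hD).1 h).2.2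
        simp only [ncomp, nrow] at this
        omega
    · by_contra! h1
      rcases mem_insert.1 (hI.2.2 _ hself (by simp only [nrow]; omega)) with h | h
      · simp only [nrow, ncol, ncomp, Prod.mk.injEq] at h; omega
      · have := ((mem_iff_le_part hD).1 h).2.2
        simp only [ncol, ncomp, nrow] at this ⊢
        omega
  · rintro ⟨ha, rfl, hcase⟩
    have hnot : ((a, part D c a + 1, c) : Node) ∉ D := fun h => by
      have := ((mem_iff_le_part hD).1 h).2.2
      omega
    refine ⟨hnot, fun η hη => ?_, fun η hη b' hb' hle => ?_, fun η hη h2 => ?_⟩ <;>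
      rcases mem_insert.1 hη with rfl | hηD
    · simp [nrow, ncol, ha]
    · exact hD.1 η hηD
    · simp only [nrow, ncol, ncomp] at hle ⊢
      rcases Nat.lt_or_ge b' (part D c a + 1) with hlt | hge
      · exact mem_insert_of_mem ((mem_iff_le_part hD).2 ⟨ha, hb', by omega⟩)
      · rw [le_antisymm hle hge]; exact mem_insert_self _ _
    · exact mem_insert_of_mem (hD.2.1 η hηD b' hb' hle)
    · simp only [nrow, ncol, ncomp] at h2 ⊢
      refine mem_insert_of_mem ((mem_iff_le_part hD).2 ⟨by omega, by omega, by omega⟩)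
    · exact mem_insert_of_mem (hD.2.2 η hηD h2)

lemma addable_or_removable_bounds (hD : IsDiagram D)
    (h : Addable D (a, b, c) ∨ Removable D (a, b, c)) :
    1 ≤ a ∧ b ≤ part D c a + 1 ∧ part D c (a + 1) < b := by
  rcases h with h | h
  · obtain ⟨ha, rfl, -⟩ := (addable_iff hD).1 h
    exact ⟨ha, le_rfl, Nat.lt_succ_of_le (part_antitone hD c ha (Nat.le_succ a))⟩
  · obtain ⟨ha, -, rfl, hlt⟩ := (removable_iff hD).1 h
    exact ⟨ha, Nat.le_succ _, hlt⟩

lemma eq_of_cont_eq (hD : IsDiagram D) (s : Fin 2 → ℤ) {x y : Node}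
    (hx : Addable D x ∨ Removable D x) (hy : Addable D y ∨ Removable D y)
    (hc : ncomp x = ncomp y) (h : cont s x = cont s y) : x = y := by
  obtain ⟨a, b, c⟩ := x
  obtain ⟨a', b', c'⟩ := y
  obtain rfl : c = c' := hc
  obtain ⟨ha, hb, hb1⟩ := addable_or_removable_bounds hD hx
  obtain ⟨ha', hb', hb1'⟩ := addable_or_removable_bounds hD hy
  simp only [cont, nrow, ncol, ncomp, add_left_inj] at h
  obtain rfl : a = a' := by
    by_contra hne
    rcases Nat.lt_or_gt_of_ne hne with hlt | hlt
    · have := part_antitone hD c (Nat.le_add_left 1 a) hlt; omega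
    · have := part_antitone hD c (Nat.le_add_left 1 a') hlt; omega
  obtain rfl : b = b' := by omega
  rfl

lemma part_erase_of_ne {γ : Node} (h : nrow γ ≠ a ∨ ncomp γ ≠ c) :
    part (D.erase γ) c a = part D c a := by
  rw [part, part, filter_erase, erase_eq_of_notMem]
  simp only [mem_filter, not_and]
  tauto

lemma part_erase_self (h : ((a, b, c) : Node) ∈ D) :
    part (D.erase (a, b, c)) c a = part D c a - 1 := by
  rw [part, part, filter_erase, card_erase_of_mem (mem_filter.2 ⟨h, rfl, rfl⟩)]

lemma part_erase_le (γ : Node) : part (D.erase γ) c a ≤ part D c a :=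
  card_le_card (filter_subset_filter _ (erase_subset γ D))

end Diagram

section Size

variable {D : Finset Node} {a b : ℕ} {c : Fin 2}

def numRows (D : Finset Node) (c : Fin 2) : ℕ :=
  (D.filter fun γ => ncol γ = 1 ∧ ncomp γ = c).card

lemma le_numRows (hD : IsDiagram D) (h : ((a, b, c) : Node) ∈ D) : a ≤ numRows D c := by
  obtain ⟨ha, hb, -⟩ := (mem_iff_le_part hD).1 h
  calc a = ((Icc 1 a).image fun a' => ((a', 1, c) : Node)).card := by
        rw [card_image_of_injective _ fun x y hxy => by simpa using hxy]; simp
    _ ≤ numRows D c := card_le_card fun γ hγ => by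
        obtain ⟨a', ha', rfl⟩ := mem_image.1 hγ
        rw [mem_Icc] at ha'
        exact mem_filter.2 ⟨mem_of_le hD h ha'.1 ha'.2 le_rfl hb, rfl, rfl⟩

lemma le_part_one (hD : IsDiagram D) (h : ((a, b, c) : Node) ∈ D) : b ≤ part D c 1 := by
  obtain ⟨ha, -, hb⟩ := (mem_iff_le_part hD).1 h
  exact hb.trans (part_antitone hD c le_rfl ha)

/-- The hook of the node `(1, 1)` of `λ^(c)` lies in `λ^(c)`. -/
lemma part_one_add_numRows_le (c : Fin 2) :
    part D c 1 + numRows D c ≤ (D.filter fun γ => ncomp γ = c).card + 1 := by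
  have hinter : (D.filter fun γ => nrow γ = 1 ∧ ncomp γ = c) ∩
      (D.filter fun γ => ncol γ = 1 ∧ ncomp γ = c) ⊆ {((1, 1, c) : Node)} := by
    intro γ h
    rw [mem_inter, mem_filter, mem_filter] at h
    obtain ⟨⟨-, h1, hc⟩, -, h2, -⟩ := h
    rw [mem_singleton, ← hc]
    exact Prod.ext h1 (Prod.ext h2 rfl)
  have hunion : (D.filter fun γ => nrow γ = 1 ∧ ncomp γ = c) ∪
      (D.filter fun γ => ncol γ = 1 ∧ ncomp γ = c) ⊆ D.filter fun γ => ncomp γ = c := by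
    intro γ h
    simp only [mem_union, mem_filter] at h ⊢
    tauto
  have := card_union_add_card_inter (D.filter fun γ => nrow γ = 1 ∧ ncomp γ = c)
    (D.filter fun γ => ncol γ = 1 ∧ ncomp γ = c)
  have h1 := card_le_card hinter
  have h2 := card_le_card hunion
  rw [card_singleton] at h1
  rw [part, numRows]
  omega

lemma part_one_le_card_filter (c : Fin 2) :
    part D c 1 ≤ (D.filter fun γ => ncomp γ = c).card :=
  card_le_card fun γ h => by simp only [mem_filter] at h ⊢; tauto

lemma numRows_le_card_filter (c : Fin 2) :
    numRows D c ≤ (D.filter fun γ => ncomp γ = c).card :=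
  card_le_card fun γ h => by simp only [mem_filter] at h ⊢; tauto

lemma card_filter_ncomp_add : (D.filter fun γ => ncomp γ = 0).card +
    (D.filter fun γ => ncomp γ = 1).card = D.card := by
  rw [← card_filter_add_card_filter_not (s := D) (p := fun γ => ncomp γ = 0)]
  congr 1
  exact congrArg card (filter_congr fun γ _ => by constructor <;> intro h <;> omega)

lemma part_one_add_numRows_add_charge_le {s : Fin 2 → ℤ} {d : ℕ} (hd : s 1 = s 0 + d)
    (c c' : Fin 2) : (part D c 1 + numRows D c' : ℤ) + s c - s c' ≤ D.card + d + 1 := by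
  have hsum := card_filter_ncomp_add (D := D)
  have := part_one_add_numRows_le (D := D)
  have := part_one_le_card_filter (D := D)
  have := numRows_le_card_filter (D := D)
  fin_cases c <;> fin_cases c' <;> simp only [Fin.zero_eta, Fin.mk_one, hd] <;> grind

lemma exists_removable (hD : IsDiagram D) (h : 1 ≤ part D c 1) :
    ∃ a, Removable D (a, part D c a, c) := by
  have hex : ∃ a, part D c (a + 1) = 0 := ⟨D.card, by
    by_contra hne
    have hmem := (mem_iff_le_part hD).2 ⟨Nat.le_add_left 1 _, Nat.one_le_iff_ne_zero.2 hne, le_rfl⟩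
    have := (le_numRows hD hmem).trans ((numRows_le_card_filter c).trans (card_filter_le _ _))
    omega⟩
  have hpos : Nat.find hex ≠ 0 := fun h0 => by
    have := Nat.find_spec hex
    simp only [h0, zero_add] at this
    omega
  have hlast : part D c (Nat.find hex - 1 + 1) ≠ 0 := Nat.find_min hex (by omega)
  rw [Nat.sub_add_cancel (by omega)] at hlast
  exact ⟨Nat.find hex, (removable_iff hD).2
    ⟨by omega, by omega, rfl, by rw [Nat.find_spec hex]; omega⟩⟩

end Size

section Content

variable {D : Finset Node} {s : Fin 2 → ℤ} {d f : ℕ}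

lemma cont_bounds_of_mem (hD : IsDiagram D) {γ : Node} (hγ : γ ∈ D) :
    s (ncomp γ) - numRows D (ncomp γ) + 1 ≤ cont s γ ∧
      cont s γ ≤ s (ncomp γ) + part D (ncomp γ) 1 - 1 := by
  obtain ⟨a, b, c⟩ := γ
  obtain ⟨ha, hb, -⟩ := (mem_iff_le_part hD).1 hγ
  have := le_numRows hD hγ
  have := le_part_one hD hγ
  simp only [cont, nrow, ncol, ncomp]
  omega

lemma cont_bounds_of_addable (hD : IsDiagram D) {γ : Node} (hγ : Addable D γ) :
    s (ncomp γ) - numRows D (ncomp γ) ≤ cont s γ ∧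
      cont s γ ≤ s (ncomp γ) + part D (ncomp γ) 1 := by
  obtain ⟨a, b, c⟩ := γ
  obtain ⟨ha, rfl, hcase⟩ := (addable_iff hD).1 hγ
  have := part_antitone hD c le_rfl ha
  have hrows : a ≤ numRows D c + 1 := by
    rcases hcase with rfl | hlt
    · omega
    rcases Nat.lt_or_ge a 2 with h2 | h2
    · omega
    · have := le_numRows hD ((mem_iff_le_part hD).2 ⟨by omega, le_rfl, by omega⟩ :
        ((a - 1, 1, c) : Node) ∈ D)
      omega
  simp only [cont, nrow, ncol, ncomp]
  omega

lemma cont_eq_of_res_eq (hD : IsDiagram D) (hd : s 1 = s 0 + d) (hf : (D.card : ℤ) + d < f)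
    {x y : Node} (hx : x ∈ D) (hy : Addable D y ∨ y ∈ D) (h : res f s x = res f s y) :
    cont s x = cont s y := by
  have hdvd : (f : ℤ) ∣ cont s y - cont s x := (ZMod.intCast_eq_intCast_iff_dvd_sub _ _ _).1 h
  have hbx := cont_bounds_of_mem (s := s) hD hx
  have hby : s (ncomp y) - numRows D (ncomp y) ≤ cont s y ∧
      cont s y ≤ s (ncomp y) + part D (ncomp y) 1 := by
    rcases hy with hy | hy
    · exact cont_bounds_of_addable hD hy
    · have := cont_bounds_of_mem (s := s) hD hy
      constructor <;> linarith [this.1, this.2]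
  have h1 := part_one_add_numRows_add_charge_le (D := D) hd (ncomp x) (ncomp y)
  have h2 := part_one_add_numRows_add_charge_le (D := D) hd (ncomp y) (ncomp x)
  have := Int.eq_zero_of_abs_lt_dvd hdvd (abs_lt.2 ⟨by linarith, by linarith⟩)
  linarith

end Content

section Normal

variable {D : Finset Node} {s : Fin 2 → ℤ} {γ : Node}

lemma chargeLT_iff_of_cont_eq {x y : Node} (h : cont s x = cont s y) :
    chargeLT s x y ↔ ncomp y < ncomp x := by
  simp [chargeLT, h]

lemma res_eq_of_cont_eq (m : ℕ) {x y : Node} (h : cont s x = cont s y) :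
    res m s x = res m s y := by
  rw [res, res, h]

/-- A removable node of `λ^(1)` followed, at the same content, by an addable node of `λ^(0)`:
the two form a factor `RA` of the signature. -/
def IsBlocked (s : Fin 2 → ℤ) (D : Finset Node) (γ : Node) : Prop :=
  ncomp γ = 1 ∧ ∃ ξ, Addable D ξ ∧ ncomp ξ = 0 ∧ cont s ξ = cont s γ

lemma IsBlocked.not_normalNode {m : ℕ} {i : ZMod m} (hγ : IsBlocked s D γ) :
    ¬ NormalNode D (chargeLT s) (res m s) i γ := by
  rintro ⟨-, hi, hcount⟩
  obtain ⟨hγ1, ξ, hξ, hξ0, hcont⟩ := hγ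
  have hξi : res m s ξ = i := (res_eq_of_cont_eq m hcont).trans hi
  have hγξ : chargeLT s γ ξ := (chargeLT_iff_of_cont_eq hcont.symm).2 (by rw [hξ0, hγ1]; decide)
  have hbetween : ∀ x, chargeLT s γ x → (chargeLT s x ξ ∨ x = ξ) → x = ξ := by
    rintro x h1 (h2 | rfl)
    · unfold chargeLT at h1 h2
      omega
    · rfl
  have hA : {x | Addable D x ∧ res m s x = i ∧ chargeLT s γ x ∧ (chargeLT s x ξ ∨ x = ξ)} =
      {ξ} := by
    ext x
    refine ⟨fun ⟨_, _, h1, h2⟩ => hbetween x h1 h2, ?_⟩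
    rintro rfl
    exact ⟨hξ, hξi, hγξ, Or.inr rfl⟩
  have hR : {x | Removable D x ∧ res m s x = i ∧ chargeLT s γ x ∧ (chargeLT s x ξ ∨ x = ξ)} =
      ∅ := by
    refine Set.eq_empty_of_forall_notMem fun x ⟨hx, _, h1, h2⟩ => ?_
    obtain rfl := hbetween x h1 h2
    exact hξ.1 hx.1
  simpa [hA, hR] using hcount ξ hξi hγξ

end Normal

section Good

variable {D : Finset Node} {s : Fin 2 → ℤ} {d f : ℕ} {γ : Node}

lemma goodNode_of_forall_isBlocked (hD : IsDiagram D) (hd : s 1 = s 0 + d)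
    (hf : (D.card : ℤ) + d < f) (hγ : Removable D γ) (hγb : ¬ IsBlocked s D γ)
    (hblocked : ∀ δ, Removable D δ → cont s δ = cont s γ → ncomp γ < ncomp δ →
      IsBlocked s D δ) :
    GoodNode D (chargeLT s) (res f s) (res f s γ) γ := by
  refine ⟨⟨hγ, rfl, fun η _ _ => ?_⟩, fun δ hδ => ?_⟩
  · have hA : {x | Addable D x ∧ res f s x = res f s γ ∧ chargeLT s γ x ∧
        (chargeLT s x η ∨ x = η)} = ∅ := by
      refine Set.eq_empty_of_forall_notMem fun x ⟨hx, hres, hlt, _⟩ => ?_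
      have hc := cont_eq_of_res_eq hD hd hf hγ.1 (Or.inl hx) hres.symm
      rw [chargeLT_iff_of_cont_eq hc] at hlt
      exact hγb ⟨by omega, x, hx, by omega, hc.symm⟩
    rw [hA, Set.ncard_empty]
    exact Nat.zero_le _
  · have hc := cont_eq_of_res_eq hD hd hf hδ.1.1 (Or.inr hγ.1) hδ.2.1
    rcases lt_trichotomy (ncomp δ) (ncomp γ) with hlt | heq | hgt
    · exact Or.inr ((chargeLT_iff_of_cont_eq hc.symm).2 hlt)
    · exact Or.inl (eq_of_cont_eq hD s (Or.inr hδ.1) (Or.inr hγ) heq hc)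
    · exact absurd hδ (hblocked δ hδ.1 hc hgt).not_normalNode

end Good

section Dominance

variable {D : Finset Node} {s : Fin 2 → ℤ} {d : ℕ}

def IsShiftDominated (d : ℕ) (D : Finset Node) : Prop :=
  ∀ j, 1 ≤ j → part D 1 (j + d) ≤ part D 0 j

lemma isShiftDominated_of_normalNode (hD : IsDiagram D) (hd : s 1 = s 0 + d) {m : ℕ}
    {i : ZMod m} {γ : Node} (hγ : NormalNode D (chargeLT s) (res m s) i γ)
    (hS : IsShiftDominated d (D.erase γ)) : IsShiftDominated d D := by
  intro j hj
  have hSj := hS j hj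
  have hle0 := part_erase_le γ (D := D) (c := 0) (a := j)
  by_cases hγj : nrow γ = j + d ∧ ncomp γ = 1
  swap
  · rw [part_erase_of_ne (by tauto)] at hSj
    omega
  obtain ⟨a, b, c⟩ := γ
  obtain ⟨rfl, rfl⟩ : a = j + d ∧ c = 1 := hγj
  obtain ⟨-, hb, rfl, -⟩ := (removable_iff hD).1 hγ.1
  rw [part_erase_self hγ.1.1, part_erase_of_ne (by simp [ncomp])] at hSj
  by_contra! hlt
  refine IsBlocked.not_normalNode ⟨rfl, (j, part D 1 (j + d), 0), ?_, rfl, ?_⟩ hγ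
  · refine (addable_iff hD).2 ⟨hj, by omega, ?_⟩
    rcases Nat.lt_or_ge j 2 with hj2 | hj2
    · exact Or.inl (by omega)
    · have hprev := hS (j - 1) (by omega)
      rw [part_erase_of_ne (by simp only [nrow]; omega), part_erase_of_ne (by simp [ncomp])] at hprev
      have := part_antitone hD 1 (by omega : 1 ≤ j - 1 + d) (by omega : j - 1 + d ≤ j + d)
      exact Or.inr (by omega)
  · simp only [cont, nrow, ncol, ncomp, hd]
    push_cast
    ring

lemma isShiftDominated_erase_of_ncomp_eq_one {γ : Node} (hS : IsShiftDominated d D)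
    (hγ : ncomp γ = 1) : IsShiftDominated d (D.erase γ) := fun j hj =>
  calc part (D.erase γ) 1 (j + d) ≤ part D 1 (j + d) := part_erase_le γ
    _ ≤ part D 0 j := hS j hj
    _ = part (D.erase γ) 0 j := (part_erase_of_ne (by rw [hγ]; simp)).symm

lemma isShiftDominated_erase_of_lt {a b : ℕ} (hD : IsDiagram D) (hS : IsShiftDominated d D)
    (hγ : Removable D (a, b, 0)) (hlt : part D 1 (a + d) < b) :
    IsShiftDominated d (D.erase (a, b, 0)) := by
  obtain ⟨-, -, rfl, -⟩ := (removable_iff hD).1 hγ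
  intro j hj
  rw [part_erase_of_ne (by simp [ncomp])]
  by_cases hja : j = a
  · subst hja
    rw [part_erase_self hγ.1]
    omega
  · rw [part_erase_of_ne (by simp only [nrow]; omega)]
    exact hS j hj

end Dominance

section Existence

variable {D : Finset Node} {s : Fin 2 → ℤ} {d f : ℕ}

lemma one_le_part_zero_one (hD : IsDiagram D) (hd : s 1 = s 0 + d) (hS : IsShiftDominated d D)
    (hne : D.Nonempty) (hblocked : ∀ δ, Removable D δ → ncomp δ = 1 → IsBlocked s D δ) :
    1 ≤ part D 0 1 := by
  by_contra! h0
  obtain ⟨⟨a, b, c⟩, hγ⟩ := hne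
  obtain ⟨-, hb, -⟩ := (mem_iff_le_part hD).1 hγ
  have hbc := le_part_one hD hγ
  obtain rfl : c = 1 := by
    by_contra hc
    obtain rfl : c = 0 := by omega
    omega
  obtain ⟨r, hr⟩ := exists_removable hD (c := 1) (by omega)
  obtain ⟨-, ⟨r', b', c'⟩, hξ, hξ0, hcont⟩ := hblocked _ hr rfl
  obtain rfl : c' = 0 := hξ0
  obtain ⟨hr', rfl, hcase⟩ := (addable_iff hD).1 hξ
  obtain rfl : r' = 1 := by
    by_contra hne
    have := part_antitone hD 0 le_rfl (by omega : 1 ≤ r' - 1)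
    rcases hcase with h | h <;> omega
  obtain ⟨hr1, hpr, -, -⟩ := (removable_iff hD).1 hr
  simp only [cont, nrow, ncol, ncomp, hd] at hcont
  have hrow : part D 1 r + d = r := by omega
  have := (hS _ hpr).trans (part_antitone hD 0 le_rfl hpr)
  rw [hrow] at this
  omega

lemma part_lt_of_forall_isBlocked (hD : IsDiagram D) (hd : s 1 = s 0 + d)
    (hS : IsShiftDominated d D)
    (hblocked : ∀ δ, Removable D δ → ncomp δ = 1 → IsBlocked s D δ) {a b : ℕ}
    (hγ : Removable D (a, b, 0)) : part D 1 (a + d) < b := by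
  obtain ⟨ha, hb, rfl, hlt⟩ := (removable_iff hD).1 hγ
  by_contra! hge
  have hnext := hS (a + 1) (by omega)
  rw [Nat.add_right_comm] at hnext
  have hρ : Removable D (a + d, part D 0 a, 1) :=
    (removable_iff hD).2 ⟨by omega, hb, le_antisymm hge (hS a ha), by omega⟩
  obtain ⟨-, ξ, hξ, hξ0, hcont⟩ := hblocked _ hρ rfl
  have hξγ : ξ = (a, part D 0 a, 0) := eq_of_cont_eq hD s (Or.inl hξ) (Or.inr hγ) hξ0
    (hcont.trans (by simp only [cont, nrow, ncol, ncomp, hd]; push_cast; ring))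
  exact hξ.1 (hξγ ▸ hγ.1)

lemma exists_goodNode_isShiftDominated_erase (hD : IsDiagram D) (hd : s 1 = s 0 + d)
    (hf : (D.card : ℤ) + d < f) (hS : IsShiftDominated d D) (hne : D.Nonempty) :
    ∃ γ, GoodNode D (chargeLT s) (res f s) (res f s γ) γ ∧ IsShiftDominated d (D.erase γ) := by
  by_cases h : ∃ γ, Removable D γ ∧ ncomp γ = 1 ∧ ¬ IsBlocked s D γ
  · obtain ⟨γ, hγ, hγ1, hγb⟩ := h
    exact ⟨γ, goodNode_of_forall_isBlocked hD hd hf hγ hγb fun δ _ _ hlt => by omega,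
      isShiftDominated_erase_of_ncomp_eq_one hS hγ1⟩
  · push Not at h
    obtain ⟨a, hγ⟩ := exists_removable hD (one_le_part_zero_one hD hd hS hne h)
    refine ⟨_, goodNode_of_forall_isBlocked hD hd hf hγ (fun hb => ?_) fun δ hδ _ hlt => ?_,
      isShiftDominated_erase_of_lt hD hS hγ (part_lt_of_forall_isBlocked hD hd hS h hγ)⟩
    · exact absurd hb.1 (by simp [ncomp])
    · exact h δ hδ (by simp only [ncomp] at hlt ⊢; omega)

end Existence

section Crystal

variable {D : Finset Node} {s : Fin 2 → ℤ} {d f k : ℕ}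

lemma CrystalSet.card_eq {α : Type*} {lt : Node → Node → Prop} {r : Node → α}
    (h : CrystalSet lt r k D) : D.card = k := by
  induction h with
  | empty => rfl
  | step _ _ hγ _ ih =>
    have hmem := hγ.1.1.1
    rw [← ih, card_erase_of_mem hmem, Nat.sub_add_cancel (card_pos.2 ⟨_, hmem⟩)]

lemma CrystalSet.isDiagram {α : Type*} {lt : Node → Node → Prop} {r : Node → α}
    (h : CrystalSet lt r k D) : IsDiagram D := by
  cases h with
  | empty => exact ⟨by simp, by simp, by simp⟩
  | step _ hD _ _ => exact hD

lemma CrystalSet.isShiftDominated (hd : s 1 = s 0 + d) {m : ℕ}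
    (h : CrystalSet (chargeLT s) (res m s) k D) : IsShiftDominated d D := by
  induction h with
  | empty => exact fun j _ => by simp [part]
  | step _ hD hγ _ ih => exact isShiftDominated_of_normalNode hD hd hγ.1 ih

lemma uglovSet_of_isShiftDominated (hd : s 1 = s 0 + d) (hD : IsDiagram D)
    (hS : IsShiftDominated d D) (hk : D.card = k) (hf : (k : ℤ) + d < f) : UglovSet f s k D := by
  induction k generalizing D with
  | zero => rw [card_eq_zero.1 hk]; exact CrystalSet.empty
  | succ k ih =>
    obtain ⟨γ, hγ, hSγ⟩ :=
      exists_goodNode_isShiftDominated_erase hD hd (by rw [hk]; exact hf) hS (card_pos.1 (by omega))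
    refine CrystalSet.step _ hD hγ (ih hγ.1.1.2 hSγ ?_ (by push_cast at hf; linarith))
    rw [card_erase_of_mem hγ.1.1.1, hk, Nat.add_sub_cancel]

end Crystal

theorem uglovSet_mono_modulus_general (e : ℕ) (s₀ s₁ : ℕ) (hs : s₀ ≤ s₁)
    (n f : ℕ) (hf : max (s₀ + n) (s₁ + n) < f) (D : Finset Node)
    (h : UglovSet e ![(s₀ : ℤ), (s₁ : ℤ)] n D) :
    UglovSet f ![(s₀ : ℤ), (s₁ : ℤ)] n D := by
  have hd : ![(s₀ : ℤ), (s₁ : ℤ)] 1 = ![(s₀ : ℤ), (s₁ : ℤ)] 0 + (s₁ - s₀ : ℕ) := by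
    simp [Nat.cast_sub hs]
  exact uglovSet_of_isShiftDominated hd (CrystalSet.isDiagram h) (CrystalSet.isShiftDominated hd h)
    (CrystalSet.card_eq h) (by omega)

/-- if `λ ∈ Φ_{e,n}^{(s₀,s₁)}` with `s₀ ≤ s₁` and `f > max (s₀+n) (s₁+n)`,
then `λ ∈ Φ_{f,n}^{(s₀,s₁)}`. -/
theorem uglovSet_mono_modulus (e : ℕ) (he : 1 < e) (s₀ s₁ : ℕ) (hs : s₀ ≤ s₁)
    (n f : ℕ) (hf : max (s₀ + n) (s₁ + n) < f) (D : Finset Node)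
    (h : UglovSet e ![(s₀ : ℤ), (s₁ : ℤ)] n D) :
    UglovSet f ![(s₀ : ℤ), (s₁ : ℤ)] n D :=
  uglovSet_mono_modulus_general e s₀ s₁ hs n f hf D h

end UglovPaper
end
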